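/- Let $H$ be a Hilbert space, $f$ a bounded nonnegative multiplication-type self-adjoint operator, and $P = \Delta + V$ with $\Delta = \nabla^*\nabla$ and $V \geq 0$ a bounded multiplication operator commuting with $f$. Suppose the operator identity $f P + P f = 2\nabla^* f \nabla + M$ holds, where $M$ (multiplication by $(\Delta + 2V)f$) is a nonnegative operator. Then for all $u \in D(P)$: $\|f^{1/2}\nabla u\|^2 \leq \|Pu\|\,\|fu\|$. -/

import Mathlib

open ContinuousLinearMap

/-!
Since `f^{1/2}` is self-adjoint, `∇* f ∇ = (f^{1/2} ∇)* (f^{1/2} ∇)`, so pairing the operator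
identity with `u` gives
`2 ‖f^{1/2} ∇u‖² + re ⟪M u, u⟫ = re ⟪(f P + P f) u, u⟫ = 2 re ⟪P u, f u⟫`, the last step
because `f` and `P = ∇*∇ + V` are self-adjoint. Dropping `re ⟪M u, u⟫ ≥ 0` and applying
Cauchy–Schwarz gives the estimate.
-/

section

open RCLike

variable {𝕜 E F : Type*} [RCLike 𝕜]
  [NormedAddCommGroup E] [InnerProductSpace 𝕜 E] [CompleteSpace E]
  [NormedAddCommGroup F] [InnerProductSpace 𝕜 F] [CompleteSpace F]

local notation "⟪" x ", " y "⟫" => @inner 𝕜 _ _ x y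

theorem isSelfAdjoint_adjoint_comp_self (T : E →L[𝕜] F) : IsSelfAdjoint (adjoint T ∘L T) := by
  rw [isSelfAdjoint_iff', adjoint_comp, adjoint_adjoint]

theorem re_inner_anticommutator_apply_self {A B : E →L[𝕜] E} (hA : IsSelfAdjoint A)
    (hB : IsSelfAdjoint B) (u : E) :
    re ⟪(A ∘L B + B ∘L A) u, u⟫ = 2 * re ⟪B u, A u⟫ := by
  have hAB : ⟪A (B u), u⟫ = ⟪B u, A u⟫ := hA.isSymmetric (B u) u
  have hBA : ⟪B (A u), u⟫ = ⟪A u, B u⟫ := hB.isSymmetric (A u) u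
  rw [add_apply, comp_apply, comp_apply, inner_add_left, map_add, hAB, hBA,
    ← inner_conj_symm (B u), conj_re]
  ring

theorem norm_sq_le_of_anticommutator_eq {A B M : E →L[𝕜] E} {T : E →L[𝕜] F}
    (hA : IsSelfAdjoint A) (hB : IsSelfAdjoint B) (hM : ∀ u, 0 ≤ re ⟪M u, u⟫)
    (h : A ∘L B + B ∘L A = (2 : 𝕜) • (adjoint T ∘L T) + M) (u : E) :
    ‖T u‖ ^ 2 ≤ ‖B u‖ * ‖A u‖ := by
  have hpair : 2 * ‖T u‖ ^ 2 + re ⟪M u, u⟫ = 2 * re ⟪B u, A u⟫ := by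
    rw [← re_inner_anticommutator_apply_self hA hB, h, apply_norm_sq_eq_inner_adjoint_left,
      add_apply, smul_apply, inner_add_left, inner_smul_left, map_add, conj_ofNat,
      ofNat_mul_re]
  linarith [hM u, re_inner_le_norm (𝕜 := 𝕜) (B u) (A u)]

end

theorem symmetrized_weighted_estimate_general {H K : Type*}
    [NormedAddCommGroup H] [InnerProductSpace ℂ H] [CompleteSpace H]
    [NormedAddCommGroup K] [InnerProductSpace ℂ K] [CompleteSpace K]
    (grad : H →L[ℂ] K) (fH V M P : H →L[ℂ] H) (fK fKsqrt : K →L[ℂ] K)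
    (hfH : IsSelfAdjoint fH)
    (hV : IsSelfAdjoint V)
    (hMpos : ∀ u : H, 0 ≤ (@inner ℂ H _ (M u) u).re)
    (hP : P = (ContinuousLinearMap.adjoint grad) ∘L grad + V)
    (hsqrt : fKsqrt ∘L fKsqrt = fK) (hsqrtsa : IsSelfAdjoint fKsqrt)
    (hid : fH ∘L P + P ∘L fH
      = (2 : ℂ) • ((ContinuousLinearMap.adjoint grad) ∘L fK ∘L grad) + M) :
    ∀ u : H, ‖fKsqrt (grad u)‖ ^ 2 ≤ ‖P u‖ * ‖fH u‖ := by
  have hPsa : IsSelfAdjoint P := hP ▸ (isSelfAdjoint_adjoint_comp_self grad).add hV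
  have hweight : adjoint grad ∘L fK ∘L grad = adjoint (fKsqrt ∘L grad) ∘L (fKsqrt ∘L grad) := by
    rw [adjoint_comp, hsqrtsa.adjoint_eq, ← hsqrt]
    rfl
  exact norm_sq_le_of_anticommutator_eq hfH hPsa hMpos (hweight ▸ hid)

/-- Abstract form of the symmetrized weighted estimate: if
`f P + P f = 2 ∇* f ∇ + M` with `M ≥ 0`, then `‖f^{1/2} ∇u‖² ≤ ‖Pu‖ ‖fu‖`. -/
theorem symmetrized_weighted_estimate {H K : Type*}
    [NormedAddCommGroup H] [InnerProductSpace ℂ H] [CompleteSpace H]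
    [NormedAddCommGroup K] [InnerProductSpace ℂ K] [CompleteSpace K]
    (grad : H →L[ℂ] K) (fH V M P : H →L[ℂ] H) (fK fKsqrt : K →L[ℂ] K)
    (hfH : IsSelfAdjoint fH) (hfHpos : ∀ u : H, 0 ≤ (@inner ℂ H _ (fH u) u).re)
    (hV : IsSelfAdjoint V) (hVpos : ∀ u : H, 0 ≤ (@inner ℂ H _ (V u) u).re)
    (hVf : V ∘L fH = fH ∘L V)
    (hMpos : ∀ u : H, 0 ≤ (@inner ℂ H _ (M u) u).re)
    (hP : P = (ContinuousLinearMap.adjoint grad) ∘L grad + V)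
    (hsqrt : fKsqrt ∘L fKsqrt = fK) (hsqrtsa : IsSelfAdjoint fKsqrt)
    (hid : fH ∘L P + P ∘L fH
      = (2 : ℂ) • ((ContinuousLinearMap.adjoint grad) ∘L fK ∘L grad) + M) :
    ∀ u : H, ‖fKsqrt (grad u)‖ ^ 2 ≤ ‖P u‖ * ‖fH u‖ :=
  symmetrized_weighted_estimate_general grad fH V M P fK fKsqrt hfH hV hMpos hP hsqrt hsqrtsa hid
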